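/- arXiv:2008.13689 — 2 statements merged into one kernel-verified Lean document; each statement's English description precedes it below -/
import Mathlib

section
/- Let σ = (σ_n: A_{n+1}⁺ → A_n⁺)_{n∈ℕ} be an everywhere growing and proper directive sequence. Then for every n ∈ ℕ, X_σ^{(n)} = ⋂_{N>n} ⋃_{k∈ℤ} T^k σ_{[n,N)}(A_N^ℤ). -/
namespace SAdicPaper

/-- A morphism between the free semigroups `A⁺ → B⁺`, determined by the (nonempty)
images of the letters. -/
structure Morphism (A : Type*) (B : Type*) where
  toFun : A → List B
  ne : ∀ a, toFun a ≠ []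

namespace Morphism

universe u v

variable {A B C : Type*}

/-- The image of a word under a morphism. -/
def word (τ : Morphism A B) : List A → List B
  | [] => []
  | a :: w => τ.toFun a ++ τ.word w

theorem word_ne (τ : Morphism A B) {w : List A} (hw : w ≠ []) : τ.word w ≠ [] := by
  cases w with
  | nil => exact absurd rfl hw
  | cons a w =>
    simp only [word]
    intro h
    exact τ.ne a (List.append_eq_nil_iff.mp h).1

/-- The identity morphism. -/
protected def id (A : Type*) : Morphism A A :=
  ⟨fun a => [a], fun a => by simp⟩

/-- Composition of morphisms. -/
def comp (τ : Morphism B C) (σ : Morphism A B) : Morphism A C :=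
  ⟨fun a => τ.word (σ.toFun a), fun a => τ.word_ne (σ.ne a)⟩

/-- `|τ|₁ = ∑_{a ∈ A} |τ(a)|`. -/
def len1 (τ : Morphism A B) [Fintype A] : ℕ := ∑ a, (τ.toFun a).length

/-- `τ` is `r`-proper: there are words `u, v` of length `r` such that every image `τ(a)`
starts with `u` and ends with `v`. -/
def RProper (τ : Morphism A B) (r : ℕ) : Prop :=
  ∃ u v : List B, u.length = r ∧ v.length = r ∧ ∀ a, u <+: τ.toFun a ∧ v <:+ τ.toFun a

/-- `τ` is proper, i.e. `1`-proper. -/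
protected def Proper (τ : Morphism A B) : Prop := τ.RProper 1

/-- Every letter of `B` occurs in some image `τ(a)`. -/
def LetterOnto (τ : Morphism A B) : Prop := ∀ b : B, ∃ a : A, b ∈ τ.toFun a

/-- Every letter of `B` occurs in every image `τ(a)`. -/
def Positive (τ : Morphism A B) : Prop := ∀ (a : A) (b : B), b ∈ τ.toFun a

/-- Transport a morphism along an equality of alphabets. -/
def castDom {A A' : Type u} {B : Type v} (h : A = A') (τ : Morphism A B) : Morphism A' B :=
  h ▸ τ

/-- The cut points of the biinfinite concatenation `⋯ τ(x₋₁) . τ(x₀) τ(x₁) ⋯`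
(where `τ(x₀)` starts at coordinate `0`). -/
def cut (τ : Morphism A B) (x : ℤ → A) (j : ℤ) : ℤ :=
  if 0 ≤ j then ∑ i ∈ Finset.range j.toNat, ((τ.toFun (x (i : ℤ))).length : ℤ)
  else -∑ i ∈ Finset.range (-j).toNat, ((τ.toFun (x (-(i : ℤ) - 1))).length : ℤ)

/-- The extension of a morphism to biinfinite sequences: `τ(x)` is the biinfinite
concatenation `⋯ τ(x₋₁) . τ(x₀) τ(x₁) ⋯`, with `τ(x₀)` starting at coordinate `0`. -/
noncomputable def seq (τ : Morphism A B) (x : ℤ → A) : ℤ → B := fun n =>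
  letI := Classical.dec (∃ j : ℤ, τ.cut x j ≤ n ∧ n < τ.cut x (j + 1))
  if h : ∃ j : ℤ, τ.cut x j ≤ n ∧ n < τ.cut x (j + 1) then
    (τ.toFun (x h.choose)).getD (n - τ.cut x h.choose).toNat
      ((τ.toFun (x 0)).head (τ.ne (x 0)))
  else (τ.toFun (x 0)).head (τ.ne (x 0))

end Morphism

variable {A B : Type*}

/-- The shift map `T`. -/
def shift (x : ℤ → A) : ℤ → A := fun n => x (n + 1)

/-- The iterate `T^k` of the shift. -/
def shiftZ (k : ℤ) (x : ℤ → A) : ℤ → A := fun n => x (n + k)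

/-- A subshift: a closed shift-invariant set of biinfinite sequences. -/
def IsSubshift [TopologicalSpace A] (X : Set (ℤ → A)) : Prop :=
  IsClosed X ∧ ∀ k : ℤ, shiftZ k '' X = X

/-- Every point of `X` has infinite orbit (no nonzero period). -/
def Aperiodic (X : Set (ℤ → A)) : Prop :=
  ∀ x ∈ X, ∀ k : ℤ, k ≠ 0 → shiftZ k x ≠ x

/-- The shift orbit of a point. -/
def orbit (x : ℤ → A) : Set (ℤ → A) := {y | ∃ k : ℤ, y = shiftZ k x}

/-- A minimal subshift: every orbit is dense. -/
def IsMinimalSubshift [TopologicalSpace A] (X : Set (ℤ → A)) : Prop :=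
  IsSubshift X ∧ X.Nonempty ∧ ∀ x ∈ X, X ⊆ closure (orbit x)

/-- A factor map between subshifts. -/
def IsFactorMap [TopologicalSpace A] [TopologicalSpace B]
    (X : Set (ℤ → A)) (Y : Set (ℤ → B)) (π : (ℤ → A) → (ℤ → B)) : Prop :=
  ContinuousOn π X ∧ π '' X = Y ∧ ∀ x ∈ X, π (shift x) = shift (π x)

/-- A conjugacy: a bijective factor map. -/
def IsConjugacy [TopologicalSpace A] [TopologicalSpace B]
    (X : Set (ℤ → A)) (Y : Set (ℤ → B)) (π : (ℤ → A) → (ℤ → B)) : Prop :=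
  IsFactorMap X Y π ∧ Set.InjOn π X

/-- Two subshifts are conjugate. -/
def Conjugate [TopologicalSpace A] [TopologicalSpace B]
    (X : Set (ℤ → A)) (Y : Set (ℤ → B)) : Prop :=
  ∃ π, IsConjugacy X Y π

/-- `⋃_{k ∈ ℤ} T^k τ(X)`. -/
def morphImage (τ : Morphism A B) (X : Set (ℤ → A)) : Set (ℤ → B) :=
  {y | ∃ k : ℤ, ∃ x ∈ X, y = shiftZ k (τ.seq x)}

/-- The finite subword `x_{[i, i+m)}` of a biinfinite sequence. -/
def subword (x : ℤ → A) (i : ℤ) (m : ℕ) : List A :=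
  (List.range m).map fun t => x (i + (t : ℤ))

/-- A centered `τ`-factorization `(k, x)` of `y` in `X`. -/
def IsCenteredFactorization (τ : Morphism A B) (X : Set (ℤ → A))
    (y : ℤ → B) (k : ℤ) (x : ℤ → A) : Prop :=
  x ∈ X ∧ y = shiftZ k (τ.seq x) ∧ 0 ≤ k ∧ k < ((τ.toFun (x 0)).length : ℤ)

/-- The pair `(X, τ)` is recognizable: every point has at most one centered
`τ`-factorization in `X`. -/
def Recognizable (X : Set (ℤ → A)) (τ : Morphism A B) : Prop :=
  ∀ y k x k' x', IsCenteredFactorization τ X y k x →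
    IsCenteredFactorization τ X y k' x' → k = k' ∧ x = x'

/-- Centered right asymptotic pair. -/
def CenteredRightAsymptotic (x x' : ℤ → A) : Prop :=
  (∀ n : ℤ, 0 < n → x n = x' n) ∧ x 0 ≠ x' 0

/-- Centered left asymptotic pair. -/
def CenteredLeftAsymptotic (x x' : ℤ → A) : Prop :=
  (∀ n : ℤ, n < 0 → x n = x' n) ∧ x 0 ≠ x' 0

/-- Right asymptotic pair. -/
def RightAsymptotic (x x' : ℤ → A) : Prop :=
  ∃ k : ℤ, CenteredRightAsymptotic (shiftZ k x) (shiftZ k x')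

/-- Left asymptotic pair. -/
def LeftAsymptotic (x x' : ℤ → A) : Prop :=
  ∃ k : ℤ, CenteredLeftAsymptotic (shiftZ k x) (shiftZ k x')

/-- A distal factor map: points of a common fiber stay at a distance bounded below along
the orbit (stated for the standard metric `dist(x, y) = 2^{-min{|i| : xᵢ ≠ yᵢ}}`). -/
def IsDistalFactor (X : Set (ℤ → A)) (π : (ℤ → A) → (ℤ → B)) : Prop :=
  ∀ x ∈ X, ∀ x' ∈ X, π x = π x' → x ≠ x' →
    ∃ m : ℕ, ∀ k : ℤ, ∃ i : ℤ, |i| ≤ (m : ℤ) ∧ x (k + i) ≠ x' (k + i)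

/-- `π` is almost `k`-to-`1`: the fibers over a residual subset of `Y` have exactly `k`
elements. -/
def AlmostKto1 [TopologicalSpace A] [TopologicalSpace B]
    (X : Set (ℤ → A)) (Y : Set (ℤ → B)) (π : (ℤ → A) → (ℤ → B)) (k : ℕ) : Prop :=
  ∃ R : Set (ℤ → B), R ⊆ Y ∧ {y : ↥Y | (y : ℤ → B) ∈ R} ∈ residual ↥Y ∧
    ∀ y ∈ R, (X ∩ π ⁻¹' {y}).encard = (k : ℕ∞)

/-- `π` has radius `r`: it is given by a local code `ψ` of radius `r` on `Y`. -/
def HasRadius {C : Type*} (Y : Set (ℤ → B)) (π : (ℤ → B) → (ℤ → C)) (r : ℕ) : Prop :=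
  ∃ ψ : (Fin (2 * r + 1) → B) → C,
    ∀ y ∈ Y, ∀ i : ℤ, π y i = ψ fun t => y (i - (r : ℤ) + ((t : ℕ) : ℤ))

/-- A directive sequence `σ = (σ_n : A_{n+1}⁺ → A_n⁺)_{n ∈ ℕ}` with `A_0 = A0`;
here `alph n` is the alphabet `A_{n+1}`, `mor0 = σ_0` and `mor n = σ_{n+1}`. -/
structure DirectiveSeq (A0 : Type) where
  alph : ℕ → Type
  fin : ∀ n, Fintype (alph n)
  mor0 : Morphism (alph 0) A0
  mor : ∀ n, Morphism (alph (n + 1)) (alph n)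

attribute [instance] DirectiveSeq.fin

namespace DirectiveSeq

variable {A0 B0 : Type}

/-- `σ_{[0, N+1)} : A_{N+1}⁺ → A_0⁺`. -/
def down (S : DirectiveSeq A0) : ∀ N : ℕ, Morphism (S.alph N) A0
  | 0 => S.mor0
  | N + 1 => (S.down N).comp (S.mor N)

/-- `σ_{[n+1, n+N+1)} : A_{n+N+1}⁺ → A_{n+1}⁺`. -/
def seg (S : DirectiveSeq A0) (n : ℕ) : ∀ N : ℕ, Morphism (S.alph (n + N)) (S.alph n)
  | 0 => Morphism.id _
  | N + 1 => (S.seg n N).comp (S.mor (n + N))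

/-- The generated S-adic subshift `X_σ = X_σ^{(0)}`. -/
def X0 (S : DirectiveSeq A0) : Set (ℤ → A0) :=
  {x | ∀ (i : ℤ) (m : ℕ), ∃ (N : ℕ) (a : S.alph N), subword x i m <:+: (S.down N).toFun a}

/-- The level `X_σ^{(n+1)}` of the S-adic subshift. -/
def levelSet (S : DirectiveSeq A0) (n : ℕ) : Set (ℤ → S.alph n) :=
  {x | ∀ (i : ℤ) (m : ℕ), ∃ (N : ℕ) (a : S.alph (n + (N + 1))),
    subword x i m <:+: (S.seg n (N + 1)).toFun a}

/-- `⟨σ_{[0,N)}⟩ → ∞`. -/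
def EverywhereGrowing (S : DirectiveSeq A0) : Prop :=
  ∀ m : ℕ, ∃ N0 : ℕ, ∀ N ≥ N0, ∀ a : S.alph N, m ≤ ((S.down N).toFun a).length

protected def Proper (S : DirectiveSeq A0) : Prop :=
  S.mor0.Proper ∧ ∀ n, (S.mor n).Proper

protected def LetterOnto (S : DirectiveSeq A0) : Prop :=
  S.mor0.LetterOnto ∧ ∀ n, (S.mor n).LetterOnto

protected def Primitive (S : DirectiveSeq A0) : Prop :=
  (∃ N, (S.down N).Positive) ∧ ∀ n, ∃ N, (S.seg n (N + 1)).Positive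

protected def Recognizable (S : DirectiveSeq A0) : Prop :=
  SAdicPaper.Recognizable (S.levelSet 0) S.mor0 ∧
    ∀ n, SAdicPaper.Recognizable (S.levelSet (n + 1)) (S.mor n)

/-- The alphabet rank `AR(σ) = liminf_n #A_n`. -/
noncomputable def rank (S : DirectiveSeq A0) : ℕ∞ :=
  Filter.liminf (fun n => (Fintype.card (S.alph n) : ℕ∞)) Filter.atTop

/-- The contraction `(σ_{[n_k, n_{k+1})})_{k ∈ ℕ}` of a directive sequence. -/
def contract (S : DirectiveSeq A0) (n : ℕ → ℕ) (hn : StrictMono n) (h0 : n 0 = 0) :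
    DirectiveSeq A0 where
  alph k := S.alph (n (k + 1) - 1)
  fin k := S.fin _
  mor0 := S.down (n 1 - 1)
  mor k := Morphism.castDom
    (congrArg S.alph
      (show (n (k + 1) - 1) + (n (k + 2) - n (k + 1)) = n (k + 2) - 1 by
        have h2 := hn (show 0 < k + 1 by omega)
        have h3 : n (k + 1) ≤ n (k + 2) := hn.monotone (by omega)
        omega))
    (S.seg (n (k + 1) - 1) (n (k + 2) - n (k + 1)))

/-- `T` is a contraction of `S`. -/
def IsContraction (T S : DirectiveSeq A0) : Prop :=
  ∃ (n : ℕ → ℕ) (hn : StrictMono n) (h0 : n 0 = 0), T = S.contract n hn h0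

/-- Two directive sequences are equivalent if both are contractions of a common one. -/
def Equivalent (S : DirectiveSeq A0) (T : DirectiveSeq A0) : Prop :=
  ∃ V : DirectiveSeq A0, IsContraction S V ∧ IsContraction T V

end DirectiveSeq

/-- `X` is generated by a proper, primitive and recognizable directive sequence of
alphabet rank at most `K`. -/
def HasRankRep {A0 : Type} (X : Set (ℤ → A0)) (K : ℕ) : Prop :=
  ∃ S : DirectiveSeq A0, S.X0 = X ∧ S.Proper ∧ S.Primitive ∧ S.Recognizable ∧
    S.rank ≤ (K : ℕ∞)

/-- The topological rank of `X` equals `K`. -/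
def TopRankEq {A0 : Type} (X : Set (ℤ → A0)) (K : ℕ) : Prop :=
  HasRankRep X K ∧ ∀ K' : ℕ, HasRankRep X K' → K ≤ K'

/-- A factor `φ : σ → τ` between directive sequences: `φ_0 : A_1⁺ → B_0⁺` (`phi0`) and
`φ_{n+1} : A_{n+1}⁺ → B_{n+1}⁺` (`phi n`), with `φ_0 = τ_0 ∘ φ_1` and
`φ_n ∘ σ_n = τ_n ∘ φ_{n+1}` for `n ≥ 1`. -/
structure SeqFactor {A0 B0 : Type} (S : DirectiveSeq A0) (T : DirectiveSeq B0) where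
  phi0 : Morphism (S.alph 0) B0
  phi : ∀ n, Morphism (S.alph n) (T.alph n)
  comm0 : phi0 = T.mor0.comp (phi 0)
  comm : ∀ n, (phi n).comp (S.mor n) = (T.mor n).comp (phi (n + 1))

namespace SeqFactor

variable {A0 B0 : Type} {S : DirectiveSeq A0} {T : DirectiveSeq B0}

def LetterOnto (F : SeqFactor S T) : Prop :=
  F.phi0.LetterOnto ∧ ∀ n, (F.phi n).LetterOnto

def Proper (F : SeqFactor S T) : Prop :=
  F.phi0.Proper ∧ ∀ n, (F.phi n).Proper

end SeqFactor

end SAdicPaper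


/-!
If `x ∈ X_σ`, a long central window of `x` occurs in some `σ_{[0,M)}(a)`, and its length forces
`M ≥ N`; so it occurs in `σ_{[0,N)}(W)` for a finite word `W`, and placing `W` in a biinfinite
sequence gives a point of `⋃_k T^k σ_{[0,N)}(A_N^ℤ)` agreeing with `x` on that window. This set
is closed, being a finite union of shifts of a continuous image of a compact space.

Conversely, let `x = T^k σ_{[0,N+1)}(y)` where all images `σ_{[0,N)}(b)` have length `≥ m`.
A window of length `m` meets at most two consecutive blocks `σ_{[0,N+1)}(y_j)`. If `σ_N` is
proper with first letter `u` and last letter `v`, a window across the boundary lies in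
`σ_{[0,N)}(v u)`, and `v u` occurs in `σ_N(W)` for any `W` of length `≥ 2`, which growth
provides as `W = σ_{[N+1,M)}(a)`. The higher levels are level `0` of the shifted sequence.
-/

namespace SAdicPaper

theorem infix_append_cases_of_length_le {α : Type*} {w X Y P Q : List α} (h : w <:+: X ++ Y)
    (hP : P <:+ X) (hQ : Q <+: Y) (hwP : w.length ≤ P.length) (hwQ : w.length ≤ Q.length) :
    w <:+: X ∨ w <:+: Y ∨ w <:+: P ++ Q := by
  rcases List.infix_append_iff.1 h with h | h | ⟨s, t, rfl, hs, ht⟩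
  · exact Or.inl h
  · exact Or.inr (Or.inl h)
  · rw [List.length_append] at hwP hwQ
    obtain ⟨p, rfl⟩ := List.suffix_of_suffix_length_le hs hP (by omega)
    obtain ⟨q, rfl⟩ := List.prefix_of_prefix_length_le ht hQ (by omega)
    exact Or.inr (Or.inr ⟨p, q, by simp⟩)

variable {A B C D : Type*}

theorem shiftZ_shiftZ (a b : ℤ) (x : ℤ → A) : shiftZ a (shiftZ b x) = shiftZ (a + b) x := by
  funext n
  simp only [shiftZ, add_assoc]

theorem continuous_shiftZ [TopologicalSpace A] (k : ℤ) :
    Continuous (shiftZ k : (ℤ → A) → ℤ → A) :=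
  continuous_pi fun n => continuous_apply (n + k)

section Subword

-- In `subword` the cast `(t : ℤ)` elaborates as a coercion of the list `List.range m` itself.
theorem subword_eq_map (x : ℤ → A) (i : ℤ) (m : ℕ) :
    subword x i m = (List.range m).map fun t : ℕ => x (i + t) := by
  simp only [subword, List.pure_def, List.bind_eq_flatMap]
  rw [show (List.range m).flatMap (fun t : ℕ => [(t : ℤ)]) = (List.range m).map (↑) from
    List.flatMap_pure_eq_map _ _, List.map_map]
  rfl

@[simp] theorem subword_length (x : ℤ → A) (i : ℤ) (m : ℕ) :
    (subword x i m).length = m := by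
  simp [subword_eq_map]

@[simp] theorem getElem_subword (x : ℤ → A) (i : ℤ) (m t : ℕ)
    (ht : t < (subword x i m).length) :
    (subword x i m)[t] = x (i + t) := by
  simp [subword_eq_map]

@[simp] theorem subword_zero (x : ℤ → A) (i : ℤ) : subword x i 0 = [] := rfl

theorem subword_add (x : ℤ → A) (i : ℤ) (m₁ m₂ : ℕ) :
    subword x i (m₁ + m₂) = subword x i m₁ ++ subword x (i + m₁) m₂ := by
  simp only [subword_eq_map, List.range_add, List.map_append, List.map_map]
  congr 1
  refine List.map_congr_left fun t _ => ?_
  simp only [Function.comp_apply, Nat.cast_add, add_assoc]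

@[simp] theorem subword_succ (x : ℤ → A) (i : ℤ) (m : ℕ) :
    subword x i (m + 1) = x i :: subword x (i + 1) m := by
  rw [Nat.add_comm, subword_add]
  simp [subword_eq_map]

theorem subword_shiftZ (k : ℤ) (x : ℤ → A) (i : ℤ) (m : ℕ) :
    subword (shiftZ k x) i m = subword x (i + k) m := by
  simp only [subword_eq_map]
  exact List.map_congr_left fun t _ => by simp only [shiftZ]; ring_nf

theorem subword_infix_subword (x : ℤ → A) {p q : ℤ} {m n : ℕ} (hqp : q ≤ p)
    (hpq : p + m ≤ q + n) : subword x p m <:+: subword x q n := by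
  obtain ⟨d, rfl⟩ : ∃ d : ℕ, p = q + d := ⟨(p - q).toNat, by omega⟩
  obtain ⟨e, rfl⟩ : ∃ e : ℕ, n = d + m + e := ⟨n - d - m, by omega⟩
  rw [subword_add, subword_add]
  exact List.infix_append _ _ _

theorem apply_eq_of_subword_eq {x z : ℤ → A} {i : ℤ} {m : ℕ}
    (h : subword z i m = subword x i m) {t : ℕ} (ht : t < m) : z (i + t) = x (i + t) := by
  rw [subword_eq_map, subword_eq_map] at h
  exact List.map_inj_left.1 h t (List.mem_range.2 ht)

theorem subword_eq_of_subword_eq_append {x : ℤ → A} {i : ℤ} {l w r : List A}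
    (h : subword x i (l ++ w ++ r).length = l ++ w ++ r) :
    subword x (i + l.length) w.length = w := by
  rw [List.length_append, List.length_append, subword_add, subword_add] at h
  exact (List.append_inj (List.append_inj' h (by simp)).1 (by simp)).2

end Subword

namespace Morphism

theorem ext {τ σ : Morphism A B} (h : τ.toFun = σ.toFun) : τ = σ := by
  cases τ; cases σ; cases h; rfl

theorem length_pos (τ : Morphism A B) (a : A) : 0 < (τ.toFun a).length :=
  List.length_pos_iff.2 (τ.ne a)

section Word

@[simp] theorem word_nil (τ : Morphism A B) : τ.word [] = [] := rfl

@[simp] theorem word_cons (τ : Morphism A B) (a : A) (w : List A) :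
    τ.word (a :: w) = τ.toFun a ++ τ.word w := rfl

@[simp] theorem word_append (τ : Morphism A B) (u v : List A) :
    τ.word (u ++ v) = τ.word u ++ τ.word v := by
  induction u with
  | nil => rfl
  | cons a u ih => simp [ih]

@[simp] theorem word_singleton (τ : Morphism A B) (a : A) : τ.word [a] = τ.toFun a :=
  List.append_nil _

@[simp] theorem comp_toFun (τ : Morphism B C) (σ : Morphism A B) (a : A) :
    (τ.comp σ).toFun a = τ.word (σ.toFun a) := rfl

@[simp] theorem id_toFun (a : A) : (Morphism.id A).toFun a = [a] := rfl

theorem word_comp (τ : Morphism B C) (σ : Morphism A B) (w : List A) :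
    (τ.comp σ).word w = τ.word (σ.word w) := by
  induction w with
  | nil => rfl
  | cons a w ih => simp [ih]

theorem word_id (w : List A) : (Morphism.id A).word w = w := by
  induction w with
  | nil => rfl
  | cons a w ih => simp [ih]

theorem comp_assoc (τ : Morphism C D) (σ : Morphism B C) (ρ : Morphism A B) :
    (τ.comp σ).comp ρ = τ.comp (σ.comp ρ) :=
  ext <| funext fun a => word_comp τ σ (ρ.toFun a)

theorem comp_id (τ : Morphism A B) : τ.comp (Morphism.id A) = τ :=
  ext <| funext fun a => word_singleton τ a

theorem id_comp (τ : Morphism A B) : (Morphism.id B).comp τ = τ :=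
  ext <| funext fun a => word_id (τ.toFun a)

theorem word_infix (τ : Morphism A B) {u v : List A} (h : u <:+: v) :
    τ.word u <:+: τ.word v := by
  obtain ⟨l, r, rfl⟩ := h
  exact ⟨τ.word l, τ.word r, by simp⟩

theorem toFun_prefix_comp (ρ : Morphism B C) {σ : Morphism A B} {u : B} {a : A}
    (h : [u] <+: σ.toFun a) : ρ.toFun u <+: (ρ.comp σ).toFun a := by
  obtain ⟨q, hq⟩ := h
  exact ⟨ρ.word q, by simp [← hq]⟩

theorem toFun_suffix_comp (ρ : Morphism B C) {σ : Morphism A B} {v : B} {a : A}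
    (h : [v] <:+ σ.toFun a) : ρ.toFun v <:+ (ρ.comp σ).toFun a := by
  obtain ⟨p, hp⟩ := h
  exact ⟨ρ.word p, by simp [← hp]⟩

theorem length_word_le (τ : Morphism A B) {c : ℕ} (hc : ∀ a, (τ.toFun a).length ≤ c)
    (w : List A) : (τ.word w).length ≤ c * w.length := by
  induction w with
  | nil => simp
  | cons a w ih =>
    rw [word_cons, List.length_append, List.length_cons, Nat.mul_succ]
    have := hc a
    omega

theorem Proper.exists_first_last {τ : Morphism A B} (hτ : τ.Proper) :
    ∃ u v : B, ∀ a, [u] <+: τ.toFun a ∧ [v] <:+ τ.toFun a := by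
  obtain ⟨lu, lv, hlu, hlv, h⟩ := hτ
  obtain ⟨u, rfl⟩ := List.length_eq_one_iff.1 hlu
  obtain ⟨v, rfl⟩ := List.length_eq_one_iff.1 hlv
  exact ⟨u, v, h⟩

theorem pair_infix_word {σ : Morphism A B} {u v : B}
    (huv : ∀ a, [u] <+: σ.toFun a ∧ [v] <:+ σ.toFun a) {W : List A} (hW : 2 ≤ W.length) :
    [v, u] <:+: σ.word W := by
  obtain ⟨a, b, W, rfl⟩ : ∃ a b W', W = a :: b :: W' := by
    match W, hW with
    | a :: b :: W', _ => exact ⟨a, b, W', rfl⟩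
  obtain ⟨p, hp⟩ := (huv a).2
  obtain ⟨q, hq⟩ := (huv b).1
  exact ⟨p, q ++ σ.word W, by simp [← hp, ← hq]⟩

end Word

section Cut

variable (τ : Morphism A B) (y : ℤ → A)

@[simp] theorem cut_zero : τ.cut y 0 = 0 := by
  simp [cut]

theorem cut_succ (j : ℤ) : τ.cut y (j + 1) = τ.cut y j + (τ.toFun (y j)).length := by
  rcases le_or_gt 0 j with hj | hj
  · rw [cut, cut, if_pos (by omega), if_pos hj, show (j + 1).toNat = j.toNat + 1 by omega,
      Finset.sum_range_succ, Int.toNat_of_nonneg hj]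
  · rcases eq_or_lt_of_le (show j + 1 ≤ 0 by omega) with h0 | h0
    · obtain rfl : j = -1 := by omega
      simp [cut]
    · rw [cut, cut, if_neg (by omega), if_neg (by omega),
        show (-j).toNat = (-(j + 1)).toNat + 1 by omega, Finset.sum_range_succ,
        show -((-(j + 1)).toNat : ℤ) - 1 = j by omega]
      ring

theorem cut_strictMono : StrictMono (τ.cut y) :=
  strictMono_int_of_lt_succ fun j => by
    rw [cut_succ]
    have := τ.length_pos (y j)
    omega

theorem self_le_cut : ∀ j : ℤ, 0 ≤ j → j ≤ τ.cut y j :=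
  Int.leInduction (by simp) fun j _ ih => by
    have := τ.cut_strictMono y (lt_add_one j)
    omega

theorem cut_le_self : ∀ j : ℤ, j ≤ 0 → τ.cut y j ≤ j :=
  Int.leInductionDown (by simp) fun j _ ih => by
    have := τ.cut_strictMono y (sub_one_lt j)
    omega

theorem exists_eq_cut_add (n : ℤ) :
    ∃ j : ℤ, ∃ t < (τ.toFun (y j)).length, n = τ.cut y j + t := by
  obtain ⟨j, hj, hmax⟩ := Int.exists_greatest_of_bdd (P := fun j => τ.cut y j ≤ n)
    ⟨max n 0, fun j hj => by
      by_contra h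
      have := τ.self_le_cut y j (by omega)
      omega⟩
    ⟨min n 0, (τ.cut_le_self y _ (min_le_right n 0)).trans (min_le_left n 0)⟩
  have hlt : n < τ.cut y (j + 1) := not_le.1 fun h => by have := hmax (j + 1) h; omega
  rw [cut_succ] at hlt
  exact ⟨j, (n - τ.cut y j).toNat, by omega, by omega⟩

theorem seq_cut_add (j : ℤ) {t : ℕ} (ht : t < (τ.toFun (y j)).length) :
    τ.seq y (τ.cut y j + t) = (τ.toFun (y j))[t] := by
  have hblock : τ.cut y j ≤ τ.cut y j + t ∧ τ.cut y j + t < τ.cut y (j + 1) := by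
    rw [cut_succ]
    omega
  have hex : ∃ i, τ.cut y i ≤ τ.cut y j + t ∧ τ.cut y j + t < τ.cut y (i + 1) :=
    ⟨j, hblock⟩
  have hchoose : hex.choose = j := by
    have hspec := hex.choose_spec
    have h1 := (τ.cut_strictMono y).lt_iff_lt.1 (hspec.1.trans_lt hblock.2)
    have h2 := (τ.cut_strictMono y).lt_iff_lt.1 (hblock.1.trans_lt hspec.2)
    omega
  simp only [seq, dif_pos hex, hchoose, add_sub_cancel_left, Int.toNat_natCast]
  exact List.getD_eq_getElem _ _ ht

theorem abs_le_abs_cut_add {j : ℤ} {t : ℕ} (ht : t < (τ.toFun (y j)).length) :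
    |j| ≤ |τ.cut y j + t| := by
  rcases le_or_gt 0 j with hj | hj
  · have := τ.self_le_cut y j hj
    rw [abs_of_nonneg hj, abs_of_nonneg (by omega)]
    omega
  · have h1 := τ.cut_le_self y (j + 1) (by omega)
    have h2 := τ.cut_succ y j
    rw [abs_of_neg hj, abs_of_neg (by omega)]
    omega

theorem cut_congr {y' : ℤ → A} {j : ℤ} (h : ∀ i, |i| ≤ |j| → y i = y' i) :
    τ.cut y j = τ.cut y' j := by
  unfold cut
  split_ifs with hj
  · refine Finset.sum_congr rfl fun i hi => ?_
    rw [Finset.mem_range] at hi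
    rw [h i (by rw [abs_le, abs_of_nonneg hj]; omega)]
  · refine congrArg Neg.neg (Finset.sum_congr rfl fun i hi => ?_)
    rw [Finset.mem_range] at hi
    rw [h (-(i : ℤ) - 1) (by rw [abs_le, abs_of_neg (not_le.1 hj)]; omega)]

theorem seq_congr {y' : ℤ → A} {n : ℤ} (h : ∀ i, |i| ≤ |n| + 1 → y i = y' i) :
    τ.seq y n = τ.seq y' n := by
  obtain ⟨j, t, ht, rfl⟩ := τ.exists_eq_cut_add y n
  have hj := τ.abs_le_abs_cut_add y ht
  have hyj : y j = y' j := h j (by omega)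
  have hcut : τ.cut y j = τ.cut y' j := τ.cut_congr y fun i hi => h i (by omega)
  rw [τ.seq_cut_add y j ht, hcut, τ.seq_cut_add y' j (hyj ▸ ht)]
  simp only [hyj]

theorem eq_cut_of_succ {f : ℤ → ℤ} (h0 : f 0 = 0)
    (hsucc : ∀ j, f (j + 1) = f j + (τ.toFun (y j)).length) : f = τ.cut y := by
  funext j
  induction j using Int.induction_on with
  | zero => simp [h0]
  | succ j ih => rw [hsucc, cut_succ, ih]
  | pred j ih =>
    have h1 := hsucc (-j - 1)
    have h2 := τ.cut_succ y (-j - 1)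
    rw [sub_add_cancel] at h1 h2
    omega

theorem cut_shiftZ (j : ℤ) : τ.cut (shiftZ j y) = fun i => τ.cut y (i + j) - τ.cut y j := by
  refine (τ.eq_cut_of_succ (shiftZ j y) (by simp) fun i => ?_).symm
  rw [add_right_comm, cut_succ]
  simp only [shiftZ]
  ring

theorem seq_shiftZ (j : ℤ) : τ.seq (shiftZ j y) = shiftZ (τ.cut y j) (τ.seq y) := by
  funext n
  obtain ⟨i, t, ht, rfl⟩ := τ.exists_eq_cut_add (shiftZ j y) n
  have hcut : τ.cut (shiftZ j y) i + t + τ.cut y j = τ.cut y (i + j) + t := by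
    rw [cut_shiftZ]
    ring
  rw [τ.seq_cut_add _ i ht]
  change _ = τ.seq y (_ + τ.cut y j)
  rw [hcut, τ.seq_cut_add y (i + j) ht]
  rfl

end Cut

section Images

variable (τ : Morphism A B)

theorem subword_seq_cut (y : ℤ → A) (j : ℤ) :
    subword (τ.seq y) (τ.cut y j) (τ.toFun (y j)).length = τ.toFun (y j) :=
  List.ext_getElem (by simp) fun t _ ht => by
    rw [getElem_subword]
    exact τ.seq_cut_add y j ht

theorem subword_seq_cut_word (y : ℤ → A) (j : ℤ) (L : ℕ) :
    subword (τ.seq y) (τ.cut y j) (τ.word (subword y j L)).length = τ.word (subword y j L) := by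
  induction L generalizing j with
  | zero => simp
  | succ L ih => rw [subword_succ, word_cons, List.length_append, subword_add, subword_seq_cut,
      ← cut_succ, ih]

theorem exists_subword_seq_infix_append {m : ℕ} (hm : ∀ a, m ≤ (τ.toFun a).length)
    (y : ℤ → A) (i : ℤ) :
    ∃ j, subword (τ.seq y) i m <:+: τ.toFun (y j) ++ τ.toFun (y (j + 1)) := by
  obtain ⟨j, t, ht, rfl⟩ := τ.exists_eq_cut_add y i
  have hpair := τ.subword_seq_cut_word y j 2
  simp only [subword_succ, subword_zero, word_cons, word_nil, List.append_nil] at hpair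
  refine ⟨j, hpair ▸ subword_infix_subword _ (by omega) ?_⟩
  have := hm (y (j + 1))
  rw [List.length_append]
  push_cast
  omega

theorem exists_mem_morphImage_subword_eq [Nonempty A] {w : List B} {W : List A}
    (h : w <:+: τ.word W) (i : ℤ) :
    ∃ z ∈ morphImage τ Set.univ, subword z i w.length = w := by
  obtain ⟨l, r, hlr⟩ := h
  let y : ℤ → A := fun j => W.getD j.toNat (Classical.arbitrary A)
  have hyW : subword y 0 W.length = W :=
    List.ext_getElem (by simp) fun t _ ht => by simp [y, ht]
  have hseq := τ.subword_seq_cut_word y 0 W.length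
  rw [hyW, cut_zero, ← hlr] at hseq
  refine ⟨shiftZ (l.length - i) (τ.seq y), ⟨_, y, trivial, rfl⟩, ?_⟩
  rw [subword_shiftZ, show i + (l.length - i) = 0 + l.length by ring]
  exact subword_eq_of_subword_eq_append hseq

theorem morphImage_univ_eq_biUnion {c : ℕ} (hc : ∀ a, (τ.toFun a).length ≤ c) :
    morphImage τ Set.univ = ⋃ k ∈ Finset.range c, shiftZ (k : ℤ) '' Set.range τ.seq := by
  ext x
  simp only [morphImage, Set.mem_ofPred_eq, Set.mem_univ, true_and, Set.mem_iUnion,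
    Set.mem_image, Set.mem_range, Finset.mem_range, exists_prop, exists_exists_eq_and]
  constructor
  · rintro ⟨k, y, rfl⟩
    obtain ⟨j, t, ht, rfl⟩ := τ.exists_eq_cut_add y k
    exact ⟨t, ht.trans_le (hc _), shiftZ j y, by rw [seq_shiftZ, shiftZ_shiftZ, add_comm]⟩
  · rintro ⟨k, -, y, rfl⟩
    exact ⟨k, y, rfl⟩

section Topology

variable [TopologicalSpace A] [TopologicalSpace B]

theorem continuous_seq [DiscreteTopology A] : Continuous τ.seq := by
  refine continuous_pi fun n => IsLocallyConstant.continuous ?_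
  refine IsLocallyConstant.iff_exists_open _ |>.2 fun y => ⟨(Set.Icc (-(|n| + 1)) (|n| + 1)).pi
    fun i => {y i}, isOpen_set_pi (Set.finite_Icc _ _) fun _ _ => isOpen_discrete _,
    by simp, fun y' hy' => τ.seq_congr y' fun i hi => ?_⟩
  exact hy' i (by rw [Set.mem_Icc, ← abs_le]; exact hi)

theorem isClosed_morphImage_univ [Finite A] [DiscreteTopology A] [T2Space B] :
    IsClosed (morphImage τ Set.univ) := by
  obtain ⟨c, hc⟩ := Finite.exists_le fun a => (τ.toFun a).length
  rw [τ.morphImage_univ_eq_biUnion hc]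
  exact Set.Finite.isClosed_biUnion (Finset.finite_toSet _) fun k _ =>
    ((isCompact_range τ.continuous_seq).image (continuous_shiftZ _)).isClosed

end Topology

end Images

end Morphism

theorem mem_closure_of_forall_window [TopologicalSpace A] {Y : Set (ℤ → A)} {x : ℤ → A}
    (h : ∀ R : ℕ, ∃ z ∈ Y, ∀ i : ℤ, i.natAbs ≤ R → z i = x i) :
    x ∈ closure Y := by
  refine mem_closure_iff.2 fun O hO hxO => ?_
  obtain ⟨I, U, hU, hIU⟩ := isOpen_pi_iff.1 hO x hxO
  obtain ⟨z, hzY, hzx⟩ := h (I.sup Int.natAbs)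
  refine ⟨z, hIU fun i hi => ?_, hzY⟩
  rw [hzx i (Finset.le_sup hi)]
  exact (hU i hi).2

namespace DirectiveSeq

variable {A0 : Type} (S : DirectiveSeq A0)

theorem down_add (K L : ℕ) : S.down (K + L) = (S.down K).comp (S.seg K L) := by
  induction L with
  | zero => exact (Morphism.comp_id _).symm
  | succ L ih =>
    change (S.down (K + L)).comp (S.mor (K + L)) = _
    rw [ih, Morphism.comp_assoc]
    rfl

theorem Proper.nonempty_alph {S : DirectiveSeq A0} (hS : S.Proper) (n : ℕ) :
    Nonempty (S.alph n) :=
  let ⟨u, _⟩ := (hS.2 n).exists_first_last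
  ⟨u⟩

theorem EverywhereGrowing.exists_le_length_seg {S : DirectiveSeq A0} (hS : S.EverywhereGrowing)
    (n m : ℕ) :
    ∃ L₀, ∀ L ≥ L₀, ∀ a : S.alph (n + L), m ≤ ((S.seg n L).toFun a).length := by
  obtain ⟨c, hc⟩ := Finite.exists_le fun b : S.alph n => ((S.down n).toFun b).length
  obtain ⟨L₀, hL₀⟩ := hS ((c + 1) * m)
  refine ⟨L₀, fun L hL a => Nat.le_of_mul_le_mul_left ?_ c.succ_pos⟩
  calc (c + 1) * m ≤ ((S.down (n + L)).toFun a).length := hL₀ _ (by omega) a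
    _ ≤ (c + 1) * ((S.seg n L).toFun a).length := by
      rw [down_add]
      exact Morphism.length_word_le _ (fun b => (hc b).trans c.le_succ) _

/-- The directive sequence `(σ_{n+1+k})_{k ∈ ℕ}`. -/
def tail (n : ℕ) : DirectiveSeq (S.alph n) where
  alph k := S.alph (n + k + 1)
  fin _ := S.fin _
  mor0 := S.mor n
  mor k := S.mor (n + k + 1)

theorem tail_down (n N : ℕ) : (S.tail n).down N = S.seg n (N + 1) := by
  induction N with
  | zero => exact (Morphism.id_comp _).symm
  | succ N ih =>
    change ((S.tail n).down N).comp (S.mor (n + N + 1)) = _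
    rw [ih]
    rfl

theorem X0_tail (n : ℕ) : (S.tail n).X0 = S.levelSet n := by
  ext x
  simp only [X0, levelSet, Set.mem_ofPred_eq, tail_down]
  rfl

theorem Proper.tail {S : DirectiveSeq A0} (hS : S.Proper) (n : ℕ) : (S.tail n).Proper :=
  ⟨hS.2 n, fun k => hS.2 (n + k + 1)⟩

theorem EverywhereGrowing.tail {S : DirectiveSeq A0} (hS : S.EverywhereGrowing) (n : ℕ) :
    (S.tail n).EverywhereGrowing := fun m =>
  let ⟨L₀, hL₀⟩ := hS.exists_le_length_seg n m
  ⟨L₀, fun N hN a => by rw [tail_down]; exact hL₀ (N + 1) (by omega) a⟩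

theorem X0_subset_iInter_morphImage : S.X0 ⊆ ⋂ N, morphImage (S.down N) Set.univ := by
  intro x hx
  refine Set.mem_iInter.2 fun N => ?_
  let _ : TopologicalSpace A0 := ⊥
  have : DiscreteTopology A0 := ⟨rfl⟩
  let _ : TopologicalSpace (S.alph N) := ⊥
  have : DiscreteTopology (S.alph N) := ⟨rfl⟩
  rw [← (S.down N).isClosed_morphImage_univ.closure_eq]
  refine mem_closure_of_forall_window fun R => ?_
  -- `c` bounds the lengths of all `σ_{[0,M)}(a)` with `M < N`.
  obtain ⟨c, hc⟩ := ((Set.finite_Iio N).biUnion fun M _ =>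
    Set.finite_range fun a : S.alph M => ((S.down M).toFun a).length).bddAbove
  set R' := max R c
  obtain ⟨M, a, ha⟩ := hx (-R') (2 * R' + 1)
  obtain ⟨L, rfl⟩ : ∃ L, M = N + L := Nat.exists_eq_add_of_le <| not_lt.1 fun hMN => by
    have : ((S.down M).toFun a).length ≤ c := hc (Set.mem_biUnion hMN ⟨a, rfl⟩)
    have := ha.length_le
    simp only [subword_length] at this
    omega
  rw [down_add, Morphism.comp_toFun] at ha
  have : Nonempty (S.alph N) := ⟨((S.seg N L).toFun a).head ((S.seg N L).ne a)⟩
  obtain ⟨z, hz, hzx⟩ := (S.down N).exists_mem_morphImage_subword_eq ha (-R')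
  rw [subword_length] at hzx
  refine ⟨z, hz, fun i hi => ?_⟩
  have := apply_eq_of_subword_eq hzx (t := (i + R').toNat) (by omega)
  rwa [show -(R' : ℤ) + (i + R').toNat = i by omega] at this

theorem exists_infix_down_of_first_last (hEG : S.EverywhereGrowing) (hpr : S.Proper) {N : ℕ}
    {u v : S.alph N} (huv : ∀ b, [u] <+: (S.mor N).toFun b ∧ [v] <:+ (S.mor N).toFun b) :
    ∃ M, ∃ a : S.alph M, (S.down N).toFun v ++ (S.down N).toFun u <:+: (S.down M).toFun a := by
  obtain ⟨L, hL⟩ := hEG.exists_le_length_seg (N + 1) 2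
  have := hpr.nonempty_alph (N + 1 + L)
  let a : S.alph (N + 1 + L) := Classical.arbitrary _
  refine ⟨N + 1 + L, a, ?_⟩
  rw [down_add, Morphism.comp_toFun]
  change _ <:+: ((S.down N).comp (S.mor N)).word _
  rw [Morphism.word_comp]
  simpa using (S.down N).word_infix (Morphism.pair_infix_word huv (hL L le_rfl a))

theorem iInter_morphImage_subset_X0 (hEG : S.EverywhereGrowing) (hpr : S.Proper) :
    ⋂ N, morphImage (S.down N) Set.univ ⊆ S.X0 := by
  intro x hx i m
  obtain ⟨N, hN⟩ := hEG m
  obtain ⟨u, v, huv⟩ := (hpr.2 N).exists_first_last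
  obtain ⟨k, y, -, rfl⟩ := Set.mem_iInter.1 hx (N + 1)
  obtain ⟨j, hj⟩ := (S.down (N + 1)).exists_subword_seq_infix_append (hN (N + 1) (by omega)) y
    (i + k)
  rw [subword_shiftZ]
  rcases infix_append_cases_of_length_le hj ((S.down N).toFun_suffix_comp (huv _).2)
      ((S.down N).toFun_prefix_comp (huv _).1) (by simpa using hN N le_rfl v)
      (by simpa using hN N le_rfl u) with h | h | h
  · exact ⟨N + 1, y j, h⟩
  · exact ⟨N + 1, y (j + 1), h⟩
  · obtain ⟨M, a, ha⟩ := S.exists_infix_down_of_first_last hEG hpr huv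
    exact ⟨M, a, h.trans ha⟩

theorem X0_eq_iInter_morphImage (hEG : S.EverywhereGrowing) (hpr : S.Proper) :
    S.X0 = ⋂ N, morphImage (S.down N) Set.univ :=
  (S.X0_subset_iInter_morphImage).antisymm (S.iInter_morphImage_subset_X0 hEG hpr)

end DirectiveSeq

theorem statement9_general {A : Type} (S : DirectiveSeq A)
    (hEG : S.EverywhereGrowing) (hproper : S.Proper) :
    S.X0 = ⋂ N : ℕ, morphImage (S.down N) Set.univ ∧
      ∀ n : ℕ, S.levelSet n = ⋂ N : ℕ, morphImage (S.seg n (N + 1)) Set.univ := by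
  refine ⟨S.X0_eq_iInter_morphImage hEG hproper, fun n => ?_⟩
  rw [← S.X0_tail n, (S.tail n).X0_eq_iInter_morphImage (hEG.tail n) (hproper.tail n)]
  exact Set.iInter_congr fun N => by rw [S.tail_down n N]; rfl

/-- for an everywhere growing and proper directive sequence,
`X_σ^{(n)} = ⋂_{N>n} ⋃_{k∈ℤ} T^k σ_{[n,N)}(A_N^ℤ)` for every `n`. -/
theorem statement9 {A : Type} [Fintype A] (S : DirectiveSeq A)
    (hEG : S.EverywhereGrowing) (hproper : S.Proper) :
    S.X0 = ⋂ N : ℕ, morphImage (S.down N) Set.univ ∧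
      ∀ n : ℕ, S.levelSet n = ⋂ N : ℕ, morphImage (S.seg n (N + 1)) Set.univ :=
  statement9_general S hEG hproper

end SAdicPaper
end

section
/- Let π: (X,T) → (Y,T) be a factor map between compact metric topological dynamical systems with (Y,T) minimal, and let K ≥ 1 be an integer. Suppose that for every y ∈ Y there exists u ∈ E(2^X,T) such that #(u∘π^{-1}(y)) ≤ K. Then π is almost k-to-1 for some k ≤ K. -/
namespace SAdicPaper

open TopologicalSpace

/-- `T^n` for a homeomorphism `T`. -/
def homPow {X : Type} [TopologicalSpace X] (T : X ≃ₜ X) : ℕ → (X ≃ₜ X)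
  | 0 => Homeomorph.refl X
  | n + 1 => (homPow T n).trans T

/-- `T^k`, `k ∈ ℤ`, for a homeomorphism `T`. -/
def homZPow {X : Type} [TopologicalSpace X] (T : X ≃ₜ X) : ℤ → (X ≃ₜ X)
  | Int.ofNat n => homPow T n
  | Int.negSucc n => (homPow T (n + 1)).symm

/-- The action induced by `T` on the hyperspace `2^X`, `A ↦ T(A)`. -/
def hyperImage {X : Type} [MetricSpace X] (T : X ≃ₜ X) (A : NonemptyCompacts X) :
    NonemptyCompacts X :=
  ⟨⟨T '' (A : Set X), A.isCompact.image T.continuous⟩, A.nonempty.image _⟩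

/-- The Ellis semigroup `E(2^X, T)` of the hyperspace system: the closure, in the product
topology of `(2^X)^(2^X)` (with `2^X` carrying the Hausdorff metric), of the set of
powers of the map induced by `T` on the hyperspace. -/
def Ellis2 {X : Type} [MetricSpace X] (T : X ≃ₜ X) :
    Set (NonemptyCompacts X → NonemptyCompacts X) :=
  closure {f | ∃ k : ℤ, f = hyperImage (homZPow T k)}

end SAdicPaper

/-!
Let `N y` be the number of points of the fibre `π⁻¹(y)`. Since `π` is a closed map, the set of
`y` whose fibre is covered by `n` open `ε`-balls is open, so `{N ≤ n}` is a `Gδ`; and `N` is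
constant along orbits. An Ellis element `u` with `#u(π⁻¹(y)) ≤ K` is a Hausdorff limit of
translates `T^k(π⁻¹(y)) = π⁻¹(S^k y)`, so for every `ε` some fibre is covered by `K` balls of
radius `ε`. Finitely many iterates of `S` bring every point into a given open set (minimality and
compactness) and are uniformly equicontinuous, so the fibres covered by `K` such balls are dense;
by Baire some fibre has at most `K` points. If `k` is the least fibre cardinality, `{N ≤ k}` is a
`Gδ` containing a dense orbit, hence residual, and `N = k` on it.
-/

open Set Metric TopologicalSpace

theorem Function.Semiconj.preimage_singleton_eq_image {α β : Type*} {π : α → β} {g : α → α}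
    {h : β → β} (hπ : Function.Semiconj π g h) (hg : Function.Surjective g)
    (hh : Function.Injective h) (y : β) : π ⁻¹' {h y} = g '' (π ⁻¹' {y}) := by
  ext x
  obtain ⟨w, rfl⟩ := hg x
  constructor
  · intro hw
    exact ⟨w, hh ((hπ w).symm.trans hw), rfl⟩
  · rintro ⟨w', hw', hgw⟩
    rw [mem_preimage, ← hgw, hπ w', mem_singleton_iff.mp hw']
    rfl

theorem exists_finset_forall_mem_of_dense_orbits {ι Y : Type*} [TopologicalSpace Y]
    [CompactSpace Y] {f : ι → Y → Y} (hf : ∀ i, Continuous (f i))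
    (hdense : ∀ y, Dense (range fun i => f i y)) {U : Set Y} (hU : IsOpen U)
    (hne : U.Nonempty) : ∃ J : Finset ι, ∀ y, ∃ i ∈ J, f i y ∈ U := by
  obtain ⟨J, hJ⟩ := isCompact_univ.elim_finite_subcover (fun i => f i ⁻¹' U)
    (fun i => hU.preimage (hf i)) fun y _ => by
      obtain ⟨_, ⟨i, rfl⟩, hi⟩ := (hdense y).exists_mem_open hU hne
      exact mem_iUnion.mpr ⟨i, hi⟩
  exact ⟨J, fun y => by simpa using hJ (mem_univ y)⟩

theorem IsClosedMap.isOpen_setOf_preimage_singleton_subset {X Y : Type*} [TopologicalSpace X]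
    [TopologicalSpace Y] {π : X → Y} (hπ : IsClosedMap π) {V : Set X} (hV : IsOpen V) :
    IsOpen {y | π ⁻¹' {y} ⊆ V} := by
  convert (hπ _ hV.isClosed_compl).isOpen_compl using 1
  ext y
  simpa [subset_def] using forall_congr' fun _ => not_imp_not.symm

section CoveredByBalls

variable {X X' : Type*}

def CoveredByBalls [PseudoMetricSpace X] (s : Set X) (n : ℕ) (ε : ℝ) : Prop :=
  ∃ P : Finset X, P.card ≤ n ∧ s ⊆ ⋃ p ∈ P, ball p ε

section Pseudo

variable [PseudoMetricSpace X] [PseudoMetricSpace X'] {s : Set X} {n : ℕ} {δ ε : ℝ}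

theorem CoveredByBalls.mono (h : CoveredByBalls s n δ) (hδε : δ ≤ ε) :
    CoveredByBalls s n ε := by
  obtain ⟨P, hP, hs⟩ := h
  exact ⟨P, hP, hs.trans (biUnion_mono subset_rfl fun p _ => ball_subset_ball hδε)⟩

theorem CoveredByBalls.image {g : X → X'} (h : CoveredByBalls s n δ)
    (hg : ∀ x x', dist x x' < δ → dist (g x) (g x') < ε) : CoveredByBalls (g '' s) n ε := by
  classical
  obtain ⟨P, hP, hs⟩ := h
  refine ⟨P.image g, Finset.card_image_le.trans hP, ?_⟩
  rintro _ ⟨x, hx, rfl⟩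
  obtain ⟨p, hp, hxp⟩ := mem_iUnion₂.mp (hs hx)
  exact mem_iUnion₂.mpr ⟨g p, Finset.mem_image_of_mem g hp, hg x p hxp⟩

theorem coveredByBalls_of_encard_le (hs : s.encard ≤ n) (hε : 0 < ε) : CoveredByBalls s n ε := by
  have hfin : s.Finite := finite_of_encard_le_coe hs
  refine ⟨hfin.toFinset, ?_, fun x hx =>
    mem_iUnion₂.mpr ⟨x, hfin.mem_toFinset.mpr hx, mem_ball_self hε⟩⟩
  rw [← ncard_eq_toFinset_card _ hfin]
  exact (encard_le_coe_iff_finite_ncard_le.mp hs).2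

end Pseudo

variable [MetricSpace X] {s : Set X} {n : ℕ}

theorem coveredByBalls_of_dist_lt {A B : NonemptyCompacts X} {δ : ℝ} (hAB : dist A B < δ)
    (hB : (B : Set X).encard ≤ n) : CoveredByBalls (A : Set X) n δ := by
  have hfin : (B : Set X).Finite := finite_of_encard_le_coe hB
  refine ⟨hfin.toFinset, ?_, fun x hx => ?_⟩
  · rw [← ncard_eq_toFinset_card _ hfin]
    exact (encard_le_coe_iff_finite_ncard_le.mp hB).2
  · rw [NonemptyCompacts.dist_eq] at hAB
    obtain ⟨b, hb, hxb⟩ := exists_dist_lt_of_hausdorffDist_lt hx hAB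
      (hausdorffEDist_ne_top_of_nonempty_of_bounded A.nonempty B.nonempty
        A.isCompact.isBounded B.isCompact.isBounded)
    exact mem_iUnion₂.mpr ⟨b, hfin.mem_toFinset.mpr hb, hxb⟩

theorem encard_le_of_forall_coveredByBalls (h : ∀ ε > 0, CoveredByBalls s n ε) :
    s.encard ≤ n := by
  by_contra! hlt
  -- `n + 1` points of `s` are `r`-separated for some `r > 0`, and an `r`-separated set is no
  -- larger than any cover by balls of radius `r / 2`.
  obtain ⟨t, hts, ht⟩ := exists_subset_encard_eq (Order.add_one_le_of_lt hlt)
  have htfin : t.Finite := finite_of_encard_eq_coe (k := n + 1) (by rw [ht]; norm_cast)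
  obtain ⟨r, hr0, hr⟩ := ENNReal.lt_iff_exists_nnreal_btwn.mp htfin.einfsep_pos
  have hr0' : (0 : ℝ) < r := NNReal.coe_pos.mpr (ENNReal.coe_pos.mp hr0)
  obtain ⟨P, hP, hsP⟩ := h (r / 2) (by positivity)
  have hsep : IsSeparated ((2 * (r / 2) : NNReal) : ENNReal) t := fun x hx y hy hxy => by
    rw [mul_div_cancel₀ _ two_ne_zero]
    exact hr.trans_le (einfsep_le_edist_of_mem hx hy hxy)
  have hcover : IsCover (r / 2) s (P : Set X) := fun x hx => by
    obtain ⟨p, hp, hxp⟩ := mem_iUnion₂.mp (hsP hx)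
    refine ⟨p, hp, edist_le_coe.mpr (NNReal.coe_le_coe.mp ?_)⟩
    simpa [coe_nndist] using (mem_ball.mp hxp).le
  have := (hsep.encard_le_packingNumber hts).trans
    ((packingNumber_two_mul_le_externalCoveringNumber _ _).trans
      hcover.externalCoveringNumber_le_encard)
  rw [ht, encard_coe_eq_coe_finsetCard] at this
  norm_cast at this
  omega

theorem encard_le_iff_forall_coveredByBalls :
    s.encard ≤ n ↔ ∀ m : ℕ, CoveredByBalls s n (1 / (m + 1)) :=
  ⟨fun h _ => coveredByBalls_of_encard_le h Nat.one_div_pos_of_nat,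
    fun h => encard_le_of_forall_coveredByBalls fun _ hε =>
      let ⟨m, hm⟩ := exists_nat_one_div_lt hε
      (h m).mono hm.le⟩

end CoveredByBalls

section Fibers

variable {X Y : Type*} [TopologicalSpace Y] {π : X → Y}

theorem IsClosedMap.isOpen_setOf_coveredByBalls_preimage [PseudoMetricSpace X]
    (hπ : IsClosedMap π) (n : ℕ) (ε : ℝ) : IsOpen {y | CoveredByBalls (π ⁻¹' {y}) n ε} := by
  have h : {y | CoveredByBalls (π ⁻¹' {y}) n ε} =
      ⋃ P : Finset X, ⋃ (_ : P.card ≤ n), {y | π ⁻¹' {y} ⊆ ⋃ p ∈ P, ball p ε} := by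
    ext y
    simp [CoveredByBalls]
  rw [h]
  exact isOpen_iUnion fun P => isOpen_iUnion fun _ =>
    hπ.isOpen_setOf_preimage_singleton_subset (isOpen_biUnion fun p _ => isOpen_ball)

variable [MetricSpace X]

theorem IsClosedMap.isGδ_setOf_encard_preimage_le (hπ : IsClosedMap π) (n : ℕ) :
    IsGδ {y | (π ⁻¹' {y}).encard ≤ n} := by
  simp_rw [encard_le_iff_forall_coveredByBalls, ofPred_forall]
  exact .iInter fun m => (hπ.isOpen_setOf_coveredByBalls_preimage n _).isGδ

theorem IsClosedMap.setOf_encard_preimage_le_mem_residual (hπ : IsClosedMap π) {n : ℕ}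
    (hdense : ∀ ε > 0, Dense {y | CoveredByBalls (π ⁻¹' {y}) n ε}) :
    {y | (π ⁻¹' {y}).encard ≤ n} ∈ residual Y := by
  simp_rw [encard_le_iff_forall_coveredByBalls, ofPred_forall]
  exact countable_iInter_mem.mpr fun m => residual_of_dense_open
    (hπ.isOpen_setOf_coveredByBalls_preimage n _) (hdense _ Nat.one_div_pos_of_nat)

end Fibers

namespace SAdicPaper

open Function

theorem coe_homPow {X : Type} [TopologicalSpace X] (T : X ≃ₜ X) (n : ℕ) :
    ⇑(homPow T n) = T^[n] := by
  induction n with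
  | zero => rfl
  | succ n ih => rw [iterate_succ', ← ih]; rfl

section Factor

variable {X Y : Type} [TopologicalSpace Y] {π : X → Y} {S : Y ≃ₜ Y}

theorem semiconj_homZPow [TopologicalSpace X] {T : X ≃ₜ X} (h : Semiconj π T S) :
    ∀ k : ℤ, Semiconj π (homZPow T k) (homZPow S k)
  | Int.ofNat n => by simpa only [homZPow, coe_homPow] using h.iterate_right n
  | Int.negSucc n => by
    have h' := h.iterate_right (n + 1)
    rw [← coe_homPow, ← coe_homPow] at h'
    exact h'.inverses_right (homPow T (n + 1)).apply_symm_apply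
      (homPow S (n + 1)).symm_apply_apply

theorem preimage_homZPow_singleton [TopologicalSpace X] {T : X ≃ₜ X} (h : Semiconj π T S)
    (k : ℤ) (y : Y) : π ⁻¹' {homZPow S k y} = homZPow T k '' (π ⁻¹' {y}) :=
  (semiconj_homZPow h k).preimage_singleton_eq_image (homZPow T k).surjective
    (homZPow S k).injective y

variable [MetricSpace X] {T : X ≃ₜ X}

theorem exists_coveredByBalls_preimage_of_mem_Ellis2 (h : Semiconj π T S) {y : Y}
    {F : NonemptyCompacts X} (hF : (F : Set X) = π ⁻¹' {y})
    {u : NonemptyCompacts X → NonemptyCompacts X} (hu : u ∈ Ellis2 T) {n : ℕ}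
    (hn : (u F : Set X).encard ≤ n) {δ : ℝ} (hδ : 0 < δ) :
    ∃ k : ℤ, CoveredByBalls (π ⁻¹' {homZPow S k y}) n δ := by
  have hcl : u F ∈ closure (range fun k : ℤ => hyperImage (homZPow T k) F) :=
    map_mem_closure (f := fun v : NonemptyCompacts X → NonemptyCompacts X => v F)
      (continuous_apply F) hu (by rintro _ ⟨k, rfl⟩; exact ⟨k, rfl⟩)
  obtain ⟨_, ⟨k, rfl⟩, hdist⟩ := Metric.mem_closure_iff.mp hcl δ hδ
  refine ⟨k, ?_⟩
  rw [dist_comm] at hdist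
  rw [preimage_homZPow_singleton h, ← hF]
  exact coveredByBalls_of_dist_lt hdist hn

theorem dense_setOf_coveredByBalls_preimage [CompactSpace X] [CompactSpace Y]
    (h : Semiconj π T S) (hmin : ∀ y : Y, Dense {z : Y | ∃ k : ℤ, z = homZPow S k y}) {n : ℕ}
    (hcov : ∀ δ > 0, ∃ y, CoveredByBalls (π ⁻¹' {y}) n δ) {ε : ℝ} (hε : 0 < ε) :
    Dense {y | CoveredByBalls (π ⁻¹' {y}) n ε} := by
  refine dense_iff_inter_open.mpr fun U hU hne => ?_
  obtain ⟨J, hJ⟩ := exists_finset_forall_mem_of_dense_orbits (fun k => (homZPow S k).continuous)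
    (fun y => (hmin y).mono (by rintro _ ⟨k, rfl⟩; exact ⟨k, rfl⟩)) hU hne
  obtain ⟨δ, hδ, hmod⟩ := Metric.uniformEquicontinuous_iff.mp
    (uniformEquicontinuous_finite.mpr fun j : J =>
      CompactSpace.uniformContinuous_of_continuous (homZPow T j).continuous) ε hε
  obtain ⟨y, hy⟩ := hcov δ hδ
  obtain ⟨j, hjJ, hjU⟩ := hJ y
  refine ⟨homZPow S j y, hjU, ?_⟩
  show CoveredByBalls _ n ε
  rw [preimage_homZPow_singleton h]
  exact hy.image fun x x' hxx' => hmod x x' hxx' ⟨j, hjJ⟩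

end Factor

theorem statement16_general {X Y : Type} [MetricSpace X] [CompactSpace X]
    [MetricSpace Y] [CompactSpace Y]
    (T : X ≃ₜ X) (Sy : Y ≃ₜ Y)
    (π : X → Y) (hcont : Continuous π)
    (hcomm : ∀ x, π (T x) = Sy (π x))
    (hmin : ∀ y : Y, Dense {z : Y | ∃ k : ℤ, z = homZPow Sy k y})
    (K : ℕ)
    (hyp : ∀ y : Y, ∃ u ∈ Ellis2 T, ∀ F : NonemptyCompacts X,
      (F : Set X) = π ⁻¹' {y} → ((u F : Set X)).encard ≤ (K : ℕ∞)) :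
    ∃ k ≤ K, ∃ R ∈ residual Y, ∀ y ∈ R, (π ⁻¹' {y}).encard = (k : ℕ∞) := by
  rcases isEmpty_or_nonempty X with hX | ⟨⟨x₀⟩⟩
  · exact ⟨0, K.zero_le, univ, Filter.univ_mem, fun y _ => by simp [eq_empty_of_isEmpty]⟩
  have : Nonempty Y := ⟨π x₀⟩
  have hπ : Semiconj π T Sy := hcomm
  have hclosed : IsClosedMap π := hcont.isClosedMap
  let N : Y → ℕ∞ := fun y => (π ⁻¹' {y}).encard
  have hN_shift (k : ℤ) (y : Y) : N (homZPow Sy k y) = N y := by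
    simp only [N, preimage_homZPow_singleton hπ, (homZPow T k).injective.injOn.encard_image]
  have hcov (δ : ℝ) (hδ : 0 < δ) : ∃ y, CoveredByBalls (π ⁻¹' {y}) K δ := by
    obtain ⟨u, hu, hu_card⟩ := hyp (π x₀)
    let F : NonemptyCompacts X :=
      ⟨⟨π ⁻¹' {π x₀}, (isClosed_singleton.preimage hcont).isCompact⟩, ⟨x₀, rfl⟩⟩
    obtain ⟨k, hk⟩ := exists_coveredByBalls_preimage_of_mem_Ellis2 hπ (F := F) rfl hu
      (hu_card F rfl) hδ
    exact ⟨_, hk⟩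
  obtain ⟨y₁, hy₁⟩ := (dense_of_mem_residual (hclosed.setOf_encard_preimage_le_mem_residual
    fun ε hε => dense_setOf_coveredByBalls_preimage hπ hmin hcov hε)).nonempty
  let y₀ := argmin N
  have hy₀ : N y₀ ≤ K := (argmin_le N y₁).trans hy₁
  obtain ⟨k, hk⟩ := ENat.ne_top_iff_exists.mp (hy₀.trans_lt (ENat.natCast_lt_top K)).ne
  refine ⟨k, by rw [← hk] at hy₀; exact_mod_cast hy₀, {y | N y ≤ k},
    residual_of_dense_Gδ (hclosed.isGδ_setOf_encard_preimage_le k) ?_,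
    fun y hy => le_antisymm hy (hk ▸ argmin_le N y)⟩
  exact (hmin y₀).mono (by rintro _ ⟨j, rfl⟩; exact ((hN_shift j y₀).trans hk.symm).le)

/-- if `π : (X,T) → (Y,S)` is a factor map between compact metric systems
with `(Y,S)` minimal and, for every `y`, the fiber `π⁻¹(y)` can be collapsed to at most
`K` points by some element `u` of the Ellis semigroup of the hyperspace, then `π` is
almost `k`-to-`1` for some `k ≤ K`. -/
theorem statement16 {X Y : Type} [MetricSpace X] [CompactSpace X]
    [MetricSpace Y] [CompactSpace Y]
    (T : X ≃ₜ X) (Sy : Y ≃ₜ Y)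
    (π : X → Y) (hcont : Continuous π) (hsurj : Function.Surjective π)
    (hcomm : ∀ x, π (T x) = Sy (π x))
    (hmin : ∀ y : Y, Dense {z : Y | ∃ k : ℤ, z = homZPow Sy k y})
    (K : ℕ) (hK : 1 ≤ K)
    (hyp : ∀ y : Y, ∃ u ∈ Ellis2 T, ∀ F : NonemptyCompacts X,
      (F : Set X) = π ⁻¹' {y} → ((u F : Set X)).encard ≤ (K : ℕ∞)) :
    ∃ k ≤ K, ∃ R ∈ residual Y, ∀ y ∈ R, (π ⁻¹' {y}).encard = (k : ℕ∞) :=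
  statement16_general T Sy π hcont hcomm hmin K hyp

end SAdicPaper
end
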